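/- arXiv:math/9904098 — 2 statements merged into one kernel-verified Lean document; each statement's English description precedes it below -/
import Mathlib

section
/- Consider a coset spectral system which in addition satisfies M(1, 1, x) = 0 for every x ∈ X with x ≠ 1, and define b⁰(i, α) := Σ_{j∈I} Σ_{β∈A} S_{ij} · conj(Ṡ_{αβ}) · M(j, β, 1). If for given (i, α) ∈ I × A there exists x ∈ X with M(i, α, x) > 0, then b⁰(i, α) is a strictly positive real number. -/
/-!
Expanding `M` over the spectral nodes turns every weighted sum `∑ F(j) G(β) H(y) M(j,β,y)` into a
sum over nodes of three `S`-transforms, which unitarity of `S` and the modular relation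
`S T S = T⁻¹ S T⁻¹` evaluate in closed form. At the vacuum, `M(1,1,1) = 1` says that the weights
`p` form a probability distribution, and the normalisation (d), twisted by the phase rule (c), says
that they average the unimodular node phases `C³ω_k / (Ċ³ω̇_d · C̈³ω̈_z)` to `1`. As `1` is an
extreme point of the unit disc, every node of positive weight has phase `1`: the nodes obey the
phase rule of the exponents, and `C³ = Ċ³C̈³`. Evaluating `∑ S_{ij} conj(Ṡ_{αβ}) S̈_{1y} ω̈_y M(j,β,y)`
once directly and once after applying the phase rule then gives `b⁰(i,α) = ∑_y S̈_{1y} M(i,α,y)`,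
which is positive since `S̈_{1y} > 0` and `M ≥ 0`.
-/

open scoped BigOperators

/-- A modular datum `(I, S, ω, C)`: the genus-zero modular matrices data of §2.1. -/
structure ModularDatum (I : Type*) [Fintype I] [DecidableEq I] : Type _ where
  one : I
  bar : I → I
  bar_invol : Function.Involutive bar
  bar_one : bar one = one
  S : Matrix I I ℂ
  S_symm : ∀ i j, S i j = S j i
  S_unitary : S ∈ Matrix.unitaryGroup I ℂ
  S_one_im : ∀ i, (S one i).im = 0
  S_one_pos : ∀ i, 0 < (S one i).re
  ω : I → ℂ
  ω_abs : ∀ i, ‖ω i‖ = 1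
  ω_one : ω one = 1
  ω_bar : ∀ i, ω (bar i) = ω i
  C : ℂ
  C_abs : ‖C‖ = 1
  rel_STS : (S * Matrix.diagonal (fun i => C * ω i)) ^ 3 = S ^ 2
  rel_Ssq : ∀ i j, (S ^ 2) i j = if j = bar i then 1 else 0

/-- A coset spectral system: three modular data `(I,S,ω,C)`, `(A,Ṡ,ω̇,Ċ)`, `(X,S̈,ω̈,C̈)`,
a nonnegative function `M` on `I × A × X` with `M(1,1,1) = 1`, and a finite spectral index
set `E` with maps `k, δ, ζ` and nonnegative weights `p`, satisfying the conclusions (a)–(d)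
of Lemma A of §3.1 of the paper. -/
structure CosetSpectralSystem (I A X E : Type*)
    [Fintype I] [DecidableEq I] [Fintype A] [DecidableEq A]
    [Fintype X] [DecidableEq X] [Fintype E] : Type _ where
  G : ModularDatum I
  H : ModularDatum A
  Q : ModularDatum X
  M : I → A → X → ℝ
  M_nonneg : ∀ i α x, 0 ≤ M i α x
  M_vac : M G.one H.one Q.one = 1
  k : E → I
  δ : E → A
  ζ : E → X
  p : E → ℝ
  p_nonneg : ∀ e, 0 ≤ p e
  spec : ∀ i α x, (M i α x : ℂ) =
    ∑ e, (G.S (G.bar i) (k e) / G.S G.one (k e)) *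
         (H.S α (δ e) / H.S H.one (δ e)) *
         (Q.S x (ζ e) / Q.S Q.one (ζ e)) * (p e : ℂ)
  vac_node : ∃ e₀, k e₀ = G.one ∧ δ e₀ = H.one ∧ ζ e₀ = Q.one ∧ 0 < p e₀
  phase : ∀ j β y, M j β y ≠ 0 → Q.ω y = G.ω j * (H.ω β)⁻¹
  norm_one : ∑ j, ∑ β, ∑ y,
    G.S G.one j * star (H.S H.one β) * star (Q.S Q.one y) * (M j β y : ℂ) = 1

lemma Complex.eq_one_of_sum_mul_eq_one {ι : Type*} {s : Finset ι} {w : ι → ℝ} {z : ι → ℂ}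
    (hw : ∀ i ∈ s, 0 ≤ w i) (hw₁ : ∑ i ∈ s, w i = 1) (hz : ∀ i ∈ s, ‖z i‖ ≤ 1)
    (h : ∑ i ∈ s, w i * z i = 1) {i : ι} (hi : i ∈ s) (hwi : w i ≠ 0) : z i = 1 := by
  have hre_le (j : ι) (hj : j ∈ s) : (z j).re ≤ 1 := (Complex.re_le_norm _).trans (hz j hj)
  have hdefect : ∑ j ∈ s, w j * (1 - (z j).re) = 0 := by
    have h' := congrArg Complex.re h
    simp only [Complex.re_sum, Complex.re_ofReal_mul, Complex.one_re] at h'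
    simp only [mul_sub, mul_one, Finset.sum_sub_distrib, hw₁, h', sub_self]
  have hre : (z i).re = 1 := by
    have hi0 := (Finset.sum_eq_zero_iff_of_nonneg fun j hj =>
      mul_nonneg (hw j hj) (sub_nonneg.2 (hre_le j hj))).1 hdefect i hi
    linarith [(mul_eq_zero.1 hi0).resolve_left hwi]
  have him : (z i).im = 0 := Complex.abs_re_eq_norm.1 <| by
    rw [hre, abs_one]
    exact le_antisymm (by simpa [hre] using Complex.re_le_norm (z i)) (hz i hi)
  exact Complex.ext hre him

namespace ModularDatum

variable {I : Type*} [Fintype I] [DecidableEq I] (D : ModularDatum I)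

lemma S_one_ne_zero (a : I) : D.S D.one a ≠ 0 := fun h => by
  simpa [h] using D.S_one_pos a

lemma ω_ne_zero (a : I) : D.ω a ≠ 0 :=
  norm_ne_zero_iff.mp (by simp [D.ω_abs])

lemma C_ne_zero : D.C ≠ 0 :=
  norm_ne_zero_iff.mp (by simp [D.C_abs])

lemma star_ω (a : I) : star (D.ω a) = (D.ω a)⁻¹ :=
  (Complex.inv_eq_conj (D.ω_abs a)).symm

lemma star_C : star D.C = D.C⁻¹ :=
  (Complex.inv_eq_conj D.C_abs).symm

lemma ofReal_re_S_one (a : I) : ((D.S D.one a).re : ℂ) = D.S D.one a :=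
  Complex.ext rfl (by simp [D.S_one_im])

lemma star_S_one (a : I) : star (D.S D.one a) = D.S D.one a :=
  Complex.conj_eq_iff_re.mpr (D.ofReal_re_S_one a)

lemma star_S (a b : I) : star (D.S a b) = D.S (D.bar a) b := by
  have h : star D.S * (D.S * D.S) = D.S := by
    rw [← mul_assoc, Matrix.mem_unitaryGroup_iff'.mp D.S_unitary, one_mul]
  have hab := congrFun (congrFun h b) (D.bar a)
  simp only [Matrix.mul_apply, ← sq, D.rel_Ssq, D.bar_invol.injective.eq_iff, mul_ite, mul_one,
    mul_zero, Finset.sum_ite_eq, Finset.mem_univ, if_true, Matrix.star_apply] at hab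
  rw [hab, D.S_symm]

lemma S_bar_right (a b : I) : D.S a (D.bar b) = star (D.S a b) := by
  rw [D.S_symm, ← D.star_S, D.S_symm]

lemma sum_star_S_mul_S (a b : I) :
    ∑ m, star (D.S a m) * D.S m b = if a = b then 1 else 0 := by
  have h := congrFun (congrFun (Matrix.mem_unitaryGroup_iff'.mp D.S_unitary) a) b
  simpa only [Matrix.mul_apply, Matrix.star_apply, D.S_symm _ a, Matrix.one_apply] using h

lemma sum_S_one_mul_S (b : I) :
    ∑ m, D.S D.one m * D.S m b = if D.one = b then 1 else 0 := by
  simpa only [D.star_S_one] using D.sum_star_S_mul_S D.one b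

/-- The modular relation `(ST)³ = S²` in the form `S T S = T⁻¹ S T⁻¹`, with `T = diag (C ω)`. -/
lemma sum_S_mul_ω_mul_S (a b : I) :
    ∑ m, D.S a m * D.ω m * D.S m b = (D.C ^ 3)⁻¹ * ((D.ω a)⁻¹ * (D.ω b)⁻¹ * D.S a b) := by
  set T : Matrix I I ℂ := Matrix.diagonal fun i => D.C * D.ω i
  have hu : star D.S * D.S = 1 := Matrix.mem_unitaryGroup_iff'.mp D.S_unitary
  have h : T * (D.S * T * D.S) * T = D.S := by
    have h3 := congrArg (star D.S * ·) D.rel_STS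
    simp only [pow_succ, pow_zero, one_mul, ← mul_assoc, hu] at h3
    simpa only [mul_assoc] using h3
  have hab := congrFun (congrFun h a) b
  rw [Matrix.mul_diagonal, Matrix.diagonal_mul, Matrix.mul_apply] at hab
  simp only [T, Matrix.mul_diagonal] at hab
  rw [← hab]
  field_simp [D.C_ne_zero, D.ω_ne_zero]
  rw [Finset.sum_mul]
  exact Finset.sum_congr rfl fun m _ => by ring

lemma sum_star_S_mul_ω_inv_mul_S (a b : I) :
    ∑ m, star (D.S a m) * (D.ω m)⁻¹ * D.S m b = D.C ^ 3 * (D.ω a * D.ω b * D.S a b) := by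
  have h := congrArg star (D.sum_S_mul_ω_mul_S a (D.bar b))
  simp only [star_sum, star_mul', star_inv₀, star_pow, D.star_ω, D.star_C, D.S_bar_right,
    star_star, D.ω_bar, inv_inv, inv_pow] at h
  rw [h]

end ModularDatum

namespace CosetSpectralSystem

variable {I A X E : Type*} [Fintype I] [DecidableEq I] [Fintype A] [DecidableEq A]
  [Fintype X] [DecidableEq X] [Fintype E] (𝒮 : CosetSpectralSystem I A X E)

lemma sum_p_eq_one : ∑ e, 𝒮.p e = 1 := by
  have h := 𝒮.spec 𝒮.G.one 𝒮.H.one 𝒮.Q.one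
  simp only [𝒮.G.bar_one, div_self (𝒮.G.S_one_ne_zero _), div_self (𝒮.H.S_one_ne_zero _),
    div_self (𝒮.Q.S_one_ne_zero _), one_mul, 𝒮.M_vac] at h
  exact_mod_cast h.symm

lemma ω_mul_M (j : I) (β : A) (y : X) :
    𝒮.Q.ω y * 𝒮.M j β y = 𝒮.G.ω j * (𝒮.H.ω β)⁻¹ * 𝒮.M j β y := by
  by_cases h : 𝒮.M j β y = 0
  · simp [h]
  · rw [𝒮.phase j β y h]

lemma sum_mul_M (f : I → ℂ) (g : A → ℂ) (h : X → ℂ) :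
    ∑ j, ∑ β, ∑ y, f j * g β * h y * 𝒮.M j β y =
      ∑ e, (∑ j, f (𝒮.G.bar j) * 𝒮.G.S j (𝒮.k e)) * (∑ β, g β * 𝒮.H.S β (𝒮.δ e)) *
        (∑ y, h y * 𝒮.Q.S y (𝒮.ζ e)) * 𝒮.p e /
        (𝒮.G.S 𝒮.G.one (𝒮.k e) * 𝒮.H.S 𝒮.H.one (𝒮.δ e) * 𝒮.Q.S 𝒮.Q.one (𝒮.ζ e)) := by
  have hbar (e : E) :
      ∑ j, f (𝒮.G.bar j) * 𝒮.G.S j (𝒮.k e) = ∑ j, f j * 𝒮.G.S (𝒮.G.bar j) (𝒮.k e) := by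
    simpa only [Function.Involutive.coe_toPerm, 𝒮.G.bar_invol _] using
      Equiv.sum_comp (𝒮.G.bar_invol.toPerm _) (fun j => f j * 𝒮.G.S (𝒮.G.bar j) (𝒮.k e))
  simp only [𝒮.spec, Finset.mul_sum, Finset.sum_comm (t := (Finset.univ : Finset E)) (β := ℂ)]
  refine Finset.sum_congr rfl fun e _ => ?_
  simp only [hbar, Finset.sum_mul, Finset.sum_div]
  rw [Finset.sum_comm_cycle]
  refine Finset.sum_congr rfl fun y _ => ?_
  rw [Finset.sum_comm]
  refine Finset.sum_congr rfl fun β _ => Finset.sum_congr rfl fun j _ => ?_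
  ring

noncomputable def nodePhase (e : E) : ℂ :=
  𝒮.G.C ^ 3 * 𝒮.G.ω (𝒮.k e) / (𝒮.H.C ^ 3 * 𝒮.H.ω (𝒮.δ e) * (𝒮.Q.C ^ 3 * 𝒮.Q.ω (𝒮.ζ e)))

lemma norm_nodePhase (e : E) : ‖𝒮.nodePhase e‖ = 1 := by
  simp [nodePhase, ModularDatum.ω_abs, ModularDatum.C_abs]

lemma sum_p_mul_nodePhase : ∑ e, 𝒮.p e * 𝒮.nodePhase e = 1 := by
  have h : ∑ j, ∑ β, ∑ y, 𝒮.G.S 𝒮.G.one j * (𝒮.G.ω j)⁻¹ * (𝒮.H.S 𝒮.H.one β * 𝒮.H.ω β) *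
      (𝒮.Q.S 𝒮.Q.one y * 𝒮.Q.ω y) * 𝒮.M j β y = 1 := by
    rw [← 𝒮.norm_one]
    refine Finset.sum_congr rfl fun j _ => Finset.sum_congr rfl fun β _ =>
      Finset.sum_congr rfl fun y _ => ?_
    rw [𝒮.H.star_S_one, 𝒮.Q.star_S_one]
    linear_combination (norm := skip) 𝒮.G.S 𝒮.G.one j * (𝒮.G.ω j)⁻¹ * 𝒮.H.S 𝒮.H.one β *
      𝒮.H.ω β * 𝒮.Q.S 𝒮.Q.one y * 𝒮.ω_mul_M j β y
    field_simp [𝒮.G.ω_ne_zero, 𝒮.H.ω_ne_zero]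
    ring
  rw [𝒮.sum_mul_M, ← Finset.sum_congr rfl fun e _ => ?_] at h
  · exact h
  simp only [𝒮.G.S_bar_right, 𝒮.G.ω_bar, 𝒮.G.sum_star_S_mul_ω_inv_mul_S,
    𝒮.H.sum_S_mul_ω_mul_S, 𝒮.Q.sum_S_mul_ω_mul_S, 𝒮.G.ω_one, 𝒮.H.ω_one, 𝒮.Q.ω_one]
  rw [nodePhase]
  field_simp [𝒮.G.S_one_ne_zero, 𝒮.H.S_one_ne_zero, 𝒮.Q.S_one_ne_zero, 𝒮.H.ω_ne_zero,
    𝒮.Q.ω_ne_zero, 𝒮.H.C_ne_zero, 𝒮.Q.C_ne_zero]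

lemma nodePhase_eq_one {e : E} (he : 𝒮.p e ≠ 0) : 𝒮.nodePhase e = 1 :=
  Complex.eq_one_of_sum_mul_eq_one (fun e _ => 𝒮.p_nonneg e) 𝒮.sum_p_eq_one
    (fun e _ => (𝒮.norm_nodePhase e).le) 𝒮.sum_p_mul_nodePhase (Finset.mem_univ e) he

lemma C_pow_three_eq : 𝒮.G.C ^ 3 = 𝒮.H.C ^ 3 * 𝒮.Q.C ^ 3 := by
  obtain ⟨e₀, hk, hδ, hζ, hp⟩ := 𝒮.vac_node
  have h := 𝒮.nodePhase_eq_one hp.ne'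
  rw [nodePhase, hk, hδ, hζ, 𝒮.G.ω_one, 𝒮.H.ω_one, 𝒮.Q.ω_one, mul_one, mul_one, mul_one,
    div_eq_one_iff_eq (mul_ne_zero (pow_ne_zero 3 𝒮.H.C_ne_zero) (pow_ne_zero 3 𝒮.Q.C_ne_zero))] at h
  exact h

lemma phase_of_p_ne_zero {e : E} (he : 𝒮.p e ≠ 0) : 𝒮.Q.ω (𝒮.ζ e) = 𝒮.G.ω (𝒮.k e) * (𝒮.H.ω (𝒮.δ e))⁻¹ := by
  have h := 𝒮.nodePhase_eq_one he
  rw [nodePhase, 𝒮.C_pow_three_eq] at h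
  field_simp [𝒮.H.C_ne_zero, 𝒮.Q.C_ne_zero, 𝒮.H.ω_ne_zero, 𝒮.Q.ω_ne_zero] at h ⊢
  linear_combination -h

section

variable (i : I) (α : A)

noncomputable def twistedSum : ℂ :=
  ∑ j, ∑ β, ∑ y, 𝒮.G.S i j * star (𝒮.H.S α β) * (𝒮.Q.S 𝒮.Q.one y * 𝒮.Q.ω y) * 𝒮.M j β y

lemma twistedSum_eq_mul_sum_M_one :
    𝒮.twistedSum i α = (𝒮.Q.C ^ 3)⁻¹ * ((𝒮.G.ω i)⁻¹ * 𝒮.H.ω α) *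
      ∑ j, ∑ β, 𝒮.G.S i j * star (𝒮.H.S α β) * 𝒮.M j β 𝒮.Q.one := by
  have hslice : ∑ j, ∑ β, 𝒮.G.S i j * star (𝒮.H.S α β) * 𝒮.M j β 𝒮.Q.one =
      ∑ j, ∑ β, ∑ y, 𝒮.G.S i j * star (𝒮.H.S α β) * (if y = 𝒮.Q.one then 1 else 0) *
        𝒮.M j β y := by
    simp only [mul_ite, ite_mul, mul_one, mul_zero, zero_mul, Finset.sum_ite_eq', Finset.mem_univ,
      if_true]
  rw [twistedSum, hslice, 𝒮.sum_mul_M, 𝒮.sum_mul_M, Finset.mul_sum]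
  refine Finset.sum_congr rfl fun e _ => ?_
  simp only [𝒮.G.S_bar_right, ModularDatum.sum_star_S_mul_S, 𝒮.Q.sum_S_mul_ω_mul_S, 𝒮.Q.ω_one,
    ite_mul, one_mul, zero_mul, Finset.sum_ite_eq', Finset.mem_univ, if_true]
  rcases eq_or_ne (𝒮.p e) 0 with hp | hp
  · simp [hp]
  rw [𝒮.phase_of_p_ne_zero hp]
  split_ifs with hk hδ
  · subst hk hδ
    field_simp [𝒮.G.ω_ne_zero, 𝒮.H.ω_ne_zero]
  all_goals simp

lemma twistedSum_eq_mul_sum_S_one_mul_M :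
    𝒮.twistedSum i α = (𝒮.G.C ^ 3)⁻¹ * 𝒮.H.C ^ 3 * ((𝒮.G.ω i)⁻¹ * 𝒮.H.ω α) *
      ∑ y, 𝒮.Q.S 𝒮.Q.one y * 𝒮.M i α y := by
  have hphase : 𝒮.twistedSum i α = ∑ j, ∑ β, ∑ y, 𝒮.G.S i j * 𝒮.G.ω j *
      (star (𝒮.H.S α β) * (𝒮.H.ω β)⁻¹) * 𝒮.Q.S 𝒮.Q.one y * 𝒮.M j β y := by
    refine Finset.sum_congr rfl fun j _ => Finset.sum_congr rfl fun β _ =>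
      Finset.sum_congr rfl fun y _ => ?_
    linear_combination 𝒮.G.S i j * star (𝒮.H.S α β) * 𝒮.Q.S 𝒮.Q.one y * 𝒮.ω_mul_M j β y
  have hrow : ∑ y, 𝒮.Q.S 𝒮.Q.one y * 𝒮.M i α y = ∑ j, ∑ β, ∑ y,
      (if j = i then 1 else 0) * (if β = α then 1 else 0) * 𝒮.Q.S 𝒮.Q.one y * 𝒮.M j β y := by
    simp only [ite_mul, one_mul, zero_mul, Finset.sum_ite_irrel, Finset.sum_const_zero,
      Finset.sum_ite_eq', Finset.mem_univ, if_true]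
  rw [hphase, hrow, 𝒮.sum_mul_M, 𝒮.sum_mul_M, Finset.mul_sum]
  refine Finset.sum_congr rfl fun e _ => ?_
  simp only [𝒮.G.S_bar_right, 𝒮.G.ω_bar, ModularDatum.sum_star_S_mul_ω_inv_mul_S,
    ModularDatum.sum_S_one_mul_S, 𝒮.G.bar_invol.eq_iff, ite_mul, one_mul, zero_mul,
    Finset.sum_ite_eq', Finset.mem_univ, if_true]
  simp only [𝒮.G.star_S, 𝒮.G.sum_S_mul_ω_mul_S, 𝒮.G.ω_bar]
  rcases eq_or_ne (𝒮.p e) 0 with hp | hp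
  · simp [hp]
  split_ifs with hζ
  · have hω : 𝒮.G.ω (𝒮.k e) = 𝒮.H.ω (𝒮.δ e) := by
      have h := 𝒮.phase_of_p_ne_zero hp
      rw [← hζ, 𝒮.Q.ω_one, eq_comm, mul_inv_eq_one₀ (𝒮.H.ω_ne_zero _)] at h
      exact h
    rw [hω]
    field_simp [𝒮.H.ω_ne_zero]
  · simp

lemma sum_S_mul_star_S_mul_M_one_eq :
    ∑ j, ∑ β, 𝒮.G.S i j * star (𝒮.H.S α β) * 𝒮.M j β 𝒮.Q.one =
      ∑ y, 𝒮.Q.S 𝒮.Q.one y * 𝒮.M i α y := by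
  have h := (𝒮.twistedSum_eq_mul_sum_M_one i α).symm.trans
    (𝒮.twistedSum_eq_mul_sum_S_one_mul_M i α)
  have hC : (𝒮.G.C ^ 3)⁻¹ * 𝒮.H.C ^ 3 = (𝒮.Q.C ^ 3)⁻¹ := by
    rw [𝒮.C_pow_three_eq]
    field_simp [𝒮.H.C_ne_zero]
  rw [hC] at h
  refine mul_left_cancel₀ ?_ h
  simp [𝒮.Q.C_ne_zero, 𝒮.G.ω_ne_zero, 𝒮.H.ω_ne_zero]

end

end CosetSpectralSystem

theorem cosetSpectralSystem_kac_wakimoto_general {I A X E : Type*}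
    [Fintype I] [DecidableEq I] [Fintype A] [DecidableEq A]
    [Fintype X] [DecidableEq X] [Fintype E]
    (𝒮 : CosetSpectralSystem I A X E)
    (b₀ : I → A → ℂ)
    (hb₀ : ∀ i α, b₀ i α
      = ∑ j, ∑ β, 𝒮.G.S i j * star (𝒮.H.S α β) * (𝒮.M j β 𝒮.Q.one : ℂ))
    (i : I) (α : A) (hx : ∃ x : X, 0 < 𝒮.M i α x) :
    ∃ r : ℝ, 0 < r ∧ b₀ i α = (r : ℂ) := by
  obtain ⟨x, hx⟩ := hx
  refine ⟨∑ y, (𝒮.Q.S 𝒮.Q.one y).re * 𝒮.M i α y, ?_, ?_⟩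
  · exact Finset.sum_pos' (fun y _ => mul_nonneg (𝒮.Q.S_one_pos y).le (𝒮.M_nonneg i α y))
      ⟨x, Finset.mem_univ x, mul_pos (𝒮.Q.S_one_pos x) hx⟩
  · rw [hb₀, 𝒮.sum_S_mul_star_S_mul_M_one_eq]
    push_cast
    simp only [ModularDatum.ofReal_re_S_one]

/-- The Kac–Wakimoto conjecture (Corollary 3.5) in abstract form: if
`M(1,1,x) = 0` for `x ≠ 1` and `M(i,α,x) > 0` for some `x`, then
`b⁰(i,α) = Σ_{j,β} S_{ij} conj(Ṡ_{αβ}) M(j,β,1)` is a strictly positive real number. -/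
theorem cosetSpectralSystem_kac_wakimoto {I A X E : Type*}
    [Fintype I] [DecidableEq I] [Fintype A] [DecidableEq A]
    [Fintype X] [DecidableEq X] [Fintype E]
    (𝒮 : CosetSpectralSystem I A X E)
    (hM : ∀ x : X, x ≠ 𝒮.Q.one → 𝒮.M 𝒮.G.one 𝒮.H.one x = 0)
    (b₀ : I → A → ℂ)
    (hb₀ : ∀ i α, b₀ i α
      = ∑ j, ∑ β, 𝒮.G.S i j * star (𝒮.H.S α β) * (𝒮.M j β 𝒮.Q.one : ℂ))
    (i : I) (α : A) (hx : ∃ x : X, 0 < 𝒮.M i α x) :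
    ∃ r : ℝ, 0 < r ∧ b₀ i α = (r : ℂ) :=
  cosetSpectralSystem_kac_wakimoto_general 𝒮 b₀ hb₀ i α hx
end

section
/- Let (I, S, ω, C) and (A, Ṡ, ω̇, Ċ) be modular data, and let b : I × A → ℝ be a function with b(i, α) ≥ 0 for all arguments and b(1, 1) = 1. Let E be a finite index set with maps k : E → I, d : E → A and weights p : E → ℝ with p(e) ≥ 0, and assume: (a) b(i, α) = Σ_{e∈E} (S_{ī, k(e)}/S_{1, k(e)}) · (Ṡ_{α, d(e)}/Ṡ_{1, d(e)}) · p(e) for all (i, α) ∈ I × A; (b) there exists e₀ ∈ E with k(e₀) = 1, d(e₀) = 1 and p(e₀) > 0; (c) whenever b(j, β) ≠ 0 one has ω_j = ω̇_β; (d) Σ_{j∈I} Σ_{β∈A} S_{1j} · conj(Ṡ_{1β}) · b(j, β) = 1. Then C³ = Ċ³, and b(i, α) = Σ_{j∈I} Σ_{β∈A} S_{ij} · conj(Ṡ_{αβ}) · b(j, β) for all (i, α) ∈ I × A. -/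
open scoped BigOperators

/-!
Write `B = (b i α)`, `Ω = diag ω`, `Ω̇ = diag ω̇` and `D = S B Ṡ†`. By unitarity and
`S_{īj} = conj S_{ij}`, hypothesis (a) says that `D` is supported on the pairs `(k e, d e)`, with
weight `p e / (S_{1,k e} Ṡ_{1,d e})` there. The phase condition (c) says `Ω B = B Ω̇`, and the
modular relation, in the form `C³ SΩS = Ω† S Ω†`, turns this into
`(C³ / Ċ³) · S Ω D Ω̇† Ṡ† = Ω† D Ω̇`. By (d) the `(1,1)` entry of this reads
`(C³ / Ċ³) · Σ_e p e ω_{k e} conj ω̇_{d e} = 1`: a convex combination of unit complex numbers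
(the weights sum to `b(1,1) = 1` by (a)) has modulus one, so all its terms of positive weight
coincide, and the vacuum node (b) makes them equal to `1`. Hence `C³ = Ċ³` and `Ω D Ω̇† = D`,
so `S D Ṡ† = D`; cancelling the unitaries in `S B Ṡ† = D = S D Ṡ†` gives `B = D = S B Ṡ†`.
-/

open Matrix

theorem eq_of_sum_smul_eq_of_norm_le_one {ι E : Type*} [Fintype ι] [NormedAddCommGroup E]
    [InnerProductSpace ℝ E] {q : ι → ℝ} {u : ι → E} {w : E} (hq : ∀ i, 0 ≤ q i)
    (hq_sum : ∑ i, q i = 1) (hu : ∀ i, ‖u i‖ ≤ 1) (hw : ‖w‖ = 1) (h : ∑ i, q i • u i = w)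
    {i : ι} (hi : q i ≠ 0) : u i = w := by
  have hdev : ∑ i, q i * ‖u i - w‖ ^ 2 ≤ 0 := calc
    ∑ i, q i * ‖u i - w‖ ^ 2
        = ∑ i, q i * ‖u i‖ ^ 2 - 2 * inner ℝ (∑ i, q i • u i) w + (∑ i, q i) * ‖w‖ ^ 2 := by
      simp only [norm_sub_sq_real, sum_inner, real_inner_smul_left, Finset.mul_sum,
        Finset.sum_mul, ← Finset.sum_sub_distrib, ← Finset.sum_add_distrib]
      exact Finset.sum_congr rfl fun i _ => by ring
    _ ≤ 0 := by
      have hle : ∑ i, q i * ‖u i‖ ^ 2 ≤ ∑ i, q i := Finset.sum_le_sum fun i _ =>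
        mul_le_of_le_one_right (hq i) (pow_le_one₀ (norm_nonneg _) (hu i))
      rw [h, real_inner_self_eq_norm_sq, hw, hq_sum]
      rw [hq_sum] at hle
      linarith
  have hterm := (Finset.sum_eq_zero_iff_of_nonneg fun i _ => mul_nonneg (hq i) (sq_nonneg _)).mp
    (hdev.antisymm (Finset.sum_nonneg fun i _ => mul_nonneg (hq i) (sq_nonneg _))) i
    (Finset.mem_univ i)
  simpa [hi, sub_eq_zero] using hterm

theorem eq_one_of_mul_sum_smul_eq_one {ι : Type*} [Fintype ι] {q : ι → ℝ} {u : ι → ℂ} {c : ℂ}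
    (hq : ∀ i, 0 ≤ q i) (hq_sum : ∑ i, q i = 1) (hu : ∀ i, ‖u i‖ = 1) (hc : ‖c‖ = 1)
    (h : c * ∑ i, q i • u i = 1) {i₀ : ι} (hi₀ : q i₀ ≠ 0) (hu₀ : u i₀ = 1) :
    c = 1 ∧ ∀ i, q i ≠ 0 → u i = 1 := by
  have hu_eq (i : ι) (hi : q i ≠ 0) : u i = c⁻¹ :=
    eq_of_sum_smul_eq_of_norm_le_one hq hq_sum (fun i => (hu i).le)
      (by rw [norm_inv, hc, inv_one]) (eq_inv_of_mul_eq_one_right h) hi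
  have hc1 : c = 1 := inv_eq_one.mp ((hu_eq i₀ hi₀).symm.trans hu₀)
  exact ⟨hc1, fun i hi => (hu_eq i hi).trans (by rw [hc1, inv_one])⟩

theorem Matrix.mul_single_mul_apply {R l m n o : Type*} [Fintype m] [Fintype n] [DecidableEq m]
    [DecidableEq n] [NonUnitalNonAssocSemiring R] (X : Matrix l m R) (Y : Matrix n o R)
    (j : m) (β : n) (c : R) (i : l) (α : o) :
    (X * single j β c * Y) i α = X i j * c * Y β α := by
  rw [mul_apply, Finset.sum_eq_single β]
  · rw [mul_single_apply_same]
  · intro γ _ hγ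
    rw [mul_single_apply_of_ne _ _ _ _ _ hγ, zero_mul]
  · simp

theorem Matrix.mul_mul_star_apply {R l m n : Type*} [Fintype m] [Fintype n]
    [NonUnitalCommSemiring R] [StarRing R] (X : Matrix l m R) (M : Matrix m n R) (Y : Matrix n n R)
    (i : l) (α : n) :
    (X * M * star Y) i α = ∑ j, ∑ β, X i j * star (Y α β) * M j β := by
  simp only [mul_apply, star_apply, Finset.sum_mul]
  rw [Finset.sum_comm]
  exact Finset.sum_congr rfl fun j _ => Finset.sum_congr rfl fun β _ => mul_right_comm _ _ _

theorem Matrix.mul_mul_star_eq_iff {R m n : Type*} [Fintype m] [DecidableEq m] [Fintype n]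
    [DecidableEq n] [CommRing R] [StarRing R] {U : Matrix m m R} {V : Matrix n n R}
    (hU : U ∈ unitaryGroup m R) (hV : V ∈ unitaryGroup n R) {X Y : Matrix m n R} :
    U * X * star V = Y ↔ X = star U * Y * V := by
  constructor
  · rintro rfl
    rw [← Matrix.mul_assoc, ← Matrix.mul_assoc, mem_unitaryGroup_iff'.mp hU, Matrix.one_mul,
      Matrix.mul_assoc, mem_unitaryGroup_iff'.mp hV, Matrix.mul_one]
  · rintro rfl
    rw [← Matrix.mul_assoc, ← Matrix.mul_assoc, mem_unitaryGroup_iff.mp hU, Matrix.one_mul,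
      Matrix.mul_assoc, mem_unitaryGroup_iff.mp hV, Matrix.mul_one]

theorem Matrix.diagonal_mem_unitaryGroup {n : Type*} [Fintype n] [DecidableEq n] {f : n → ℂ}
    (hf : ∀ i, ‖f i‖ = 1) : diagonal f ∈ unitaryGroup n ℂ := by
  rw [mem_unitaryGroup_iff, star_eq_conjTranspose, diagonal_conjTranspose, diagonal_mul_diagonal,
    ← diagonal_one]
  congr 1
  funext i
  rw [Pi.star_apply, RCLike.star_def, RCLike.mul_conj, hf]
  norm_num

theorem Matrix.diagonal_mul_eq_mul_diagonal {I A R : Type*} [Fintype I] [DecidableEq I] [Fintype A]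
    [DecidableEq A] [CommSemiring R] {f : I → R} {g : A → R} {M : Matrix I A R}
    (h : ∀ i α, M i α ≠ 0 → f i = g α) : diagonal f * M = M * diagonal g := by
  ext i α
  rw [diagonal_mul, mul_diagonal]
  by_cases hM : M i α = 0
  · simp [hM]
  · rw [h i α hM, mul_comm]

theorem mul_mul_eq_star_mul_mul_star_of_mul_pow_three_eq_sq {R : Type*} [Monoid R] [StarMul R]
    {s t : R} (hs : s ∈ unitary R) (ht : t ∈ unitary R) (h : (s * t) ^ 3 = s ^ 2) :
    s * t * s = star t * s * star t := by
  lift s to unitary R using hs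
  lift t to unitary R using ht
  norm_cast at h ⊢
  rw [Unitary.star_eq_inv]
  calc s * t * s = t⁻¹ * s⁻¹ * ((s * t) * (s * t) * (s * t)) * t⁻¹ := by group
    _ = t⁻¹ * s * t⁻¹ := by rw [← pow_three', h]; group

namespace ModularDatum

variable {I : Type*} [Fintype I] [DecidableEq I] (G : ModularDatum I)

theorem S_one_ne_zero_s17 (i : I) : G.S G.one i ≠ 0 := fun h => by
  simpa [h] using G.S_one_pos i

theorem star_S_one_s17 (i : I) : star (G.S G.one i) = G.S G.one i :=
  Complex.conj_eq_iff_im.mpr (G.S_one_im i)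

theorem star_C_s17 : star G.C = G.C⁻¹ := (Complex.inv_eq_conj G.C_abs).symm

theorem C_ne_zero_s17 : G.C ≠ 0 := norm_ne_zero_iff.mp (G.C_abs ▸ one_ne_zero)

theorem star_S_mul_S : star G.S * G.S = 1 := mem_unitaryGroup_iff'.mp G.S_unitary

theorem S_bar_apply (i j : I) : G.S (G.bar i) j = star (G.S i j) := by
  have hS : G.S = star G.S * G.S ^ 2 := by rw [sq, ← mul_assoc, G.star_S_mul_S, one_mul]
  have hSji := congrFun (congrFun hS j) i
  simp only [mul_apply, G.rel_Ssq, star_apply, mul_ite, mul_one, mul_zero, eq_comm (a := i),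
    G.bar_invol.eq_iff, Finset.sum_ite_eq', Finset.mem_univ, if_true] at hSji
  rw [G.S_symm j i] at hSji
  rw [hSji, star_star]

theorem diagonal_ω_mem_unitaryGroup : diagonal G.ω ∈ unitaryGroup I ℂ :=
  diagonal_mem_unitaryGroup G.ω_abs

theorem C_pow_three_smul_S_mul_diagonal_ω_mul_S :
    G.C ^ 3 • (G.S * diagonal G.ω * G.S) = star (diagonal G.ω) * G.S * star (diagonal G.ω) := by
  have hT : diagonal (fun i => G.C * G.ω i) = G.C • diagonal G.ω := by
    rw [← diagonal_smul]; rfl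
  have hSTS := mul_mul_eq_star_mul_mul_star_of_mul_pow_three_eq_sq G.S_unitary
    (diagonal_mem_unitaryGroup fun i => by rw [norm_mul, G.C_abs, G.ω_abs, one_mul]) G.rel_STS
  rw [hT, star_smul, G.star_C_s17] at hSTS
  simp only [Matrix.mul_smul, Matrix.smul_mul, smul_smul] at hSTS
  calc G.C ^ 3 • (G.S * diagonal G.ω * G.S)
      = G.C ^ 2 • G.C • (G.S * diagonal G.ω * G.S) := by rw [smul_smul, ← pow_succ]
    _ = star (diagonal G.ω) * G.S * star (diagonal G.ω) := by
      rw [hSTS, smul_smul, sq, mul_mul_mul_comm, mul_inv_cancel₀ G.C_ne_zero_s17, mul_one, one_smul]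

theorem star_C_pow_three_smul_star_S_mul_star_diagonal_ω_mul_star_S :
    star (G.C ^ 3) • (star G.S * star (diagonal G.ω) * star G.S)
      = diagonal G.ω * star G.S * diagonal G.ω := by
  simpa only [star_smul, star_mul, star_star, Matrix.mul_assoc] using
    congrArg star G.C_pow_three_smul_S_mul_diagonal_ω_mul_S

end ModularDatum

namespace ModularDatum

variable {I A E : Type*} [Fintype I] [DecidableEq I] [Fintype A] [DecidableEq A] [Fintype E]
  (G : ModularDatum I) (H : ModularDatum A) (k : E → I) (d : E → A) (p : E → ℝ)

theorem smul_S_mul_diagonal_mul_mul_star_diagonal_mul_star_S {M : Matrix I A ℂ}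
    (hM : diagonal G.ω * M = M * diagonal H.ω) :
    (G.C ^ 3 * star (H.C ^ 3)) •
        (G.S * diagonal G.ω * (G.S * M * star H.S) * star (diagonal H.ω) * star H.S)
      = star (diagonal G.ω) * (G.S * M * star H.S) * diagonal H.ω := by
  have hM' : star (diagonal G.ω) * M * diagonal H.ω = M := by
    rw [Matrix.mul_assoc, ← hM, ← Matrix.mul_assoc,
      mem_unitaryGroup_iff'.mp G.diagonal_ω_mem_unitaryGroup, Matrix.one_mul]
  calc (G.C ^ 3 * star (H.C ^ 3)) •
        (G.S * diagonal G.ω * (G.S * M * star H.S) * star (diagonal H.ω) * star H.S)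
      = G.C ^ 3 • (G.S * diagonal G.ω * G.S) * M *
          (star (H.C ^ 3) • (star H.S * star (diagonal H.ω) * star H.S)) := by
        simp only [Matrix.smul_mul, Matrix.mul_smul, smul_smul, Matrix.mul_assoc, mul_comm]
    _ = star (diagonal G.ω) * G.S * (star (diagonal G.ω) * M * diagonal H.ω) * star H.S *
          diagonal H.ω := by
        rw [G.C_pow_three_smul_S_mul_diagonal_ω_mul_S,
          H.star_C_pow_three_smul_star_S_mul_star_diagonal_ω_mul_star_S]
        simp only [Matrix.mul_assoc]
    _ = star (diagonal G.ω) * (G.S * M * star H.S) * diagonal H.ω := by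
        rw [hM']; simp only [Matrix.mul_assoc]

noncomputable def spectralMatrix : Matrix I A ℂ :=
  ∑ e, single (k e) (d e) ((p e : ℂ) / (G.S G.one (k e) * H.S H.one (d e)))

theorem star_S_mul_spectralMatrix_mul_S_apply (i : I) (α : A) :
    (star G.S * spectralMatrix G H k d p * H.S) i α =
      ∑ e, G.S (G.bar i) (k e) / G.S G.one (k e) * (H.S α (d e) / H.S H.one (d e)) * (p e : ℂ) := by
  simp only [spectralMatrix, Matrix.mul_sum, Matrix.sum_mul, Matrix.sum_apply, mul_single_mul_apply,
    star_apply]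
  refine Finset.sum_congr rfl fun e _ => ?_
  rw [G.S_bar_apply, G.S_symm i, H.S_symm α]
  ring

theorem S_mul_diagonal_mul_spectralMatrix_mul_star_apply_one_one :
    (G.S * diagonal G.ω * spectralMatrix G H k d p * star (diagonal H.ω) * star H.S) G.one H.one =
      ∑ e, (p e : ℂ) * (G.ω (k e) * star (H.ω (d e))) := by
  simp only [spectralMatrix, Matrix.mul_sum, Matrix.sum_mul, Matrix.sum_apply]
  refine Finset.sum_congr rfl fun e _ => ?_
  rw [Matrix.mul_assoc _ (star (diagonal H.ω)), mul_single_mul_apply, mul_diagonal,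
    star_eq_conjTranspose, diagonal_conjTranspose, diagonal_mul, star_apply,
    H.star_S_one_s17, Pi.star_apply]
  field_simp [G.S_one_ne_zero_s17 (k e), H.S_one_ne_zero_s17 (d e)]

theorem diagonal_mul_spectralMatrix_mul_star_diagonal
    (hph : ∀ e, p e ≠ 0 → G.ω (k e) * star (H.ω (d e)) = 1) :
    diagonal G.ω * spectralMatrix G H k d p * star (diagonal H.ω) = spectralMatrix G H k d p := by
  simp only [spectralMatrix, Matrix.mul_sum, Matrix.sum_mul]
  refine Finset.sum_congr rfl fun e _ => ?_
  ext i α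
  rw [star_eq_conjTranspose, diagonal_conjTranspose, mul_diagonal, diagonal_mul, single_apply]
  split_ifs with hkd
  · obtain ⟨rfl, rfl⟩ := hkd
    by_cases hp : p e = 0
    · simp [hp]
    · rw [Pi.star_apply, mul_right_comm, hph e hp, one_mul]
  · simp

theorem S_mul_of_mul_star_S_eq_spectralMatrix {b : I → A → ℝ}
    (ha : ∀ i α, (b i α : ℂ) = ∑ e, (G.S (G.bar i) (k e) / G.S G.one (k e)) *
      (H.S α (d e) / H.S H.one (d e)) * (p e : ℂ)) :
    G.S * of (fun i α => (b i α : ℂ)) * star H.S = spectralMatrix G H k d p := by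
  rw [mul_mul_star_eq_iff G.S_unitary H.S_unitary]
  ext i α
  exact (ha i α).trans (G.star_S_mul_spectralMatrix_mul_S_apply H k d p i α).symm

theorem C_pow_three_mul_star_mul_sum_phase_eq {M : Matrix I A ℂ}
    (hM : diagonal G.ω * M = M * diagonal H.ω)
    (hMD : G.S * M * star H.S = spectralMatrix G H k d p) :
    (G.C ^ 3 * star (H.C ^ 3)) * ∑ e, p e • (G.ω (k e) * star (H.ω (d e))) =
      spectralMatrix G H k d p G.one H.one := by
  have h11 := congrFun (congrFun
    (G.smul_S_mul_diagonal_mul_mul_star_diagonal_mul_star_S H hM) G.one) H.one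
  rw [hMD, Matrix.smul_apply, G.S_mul_diagonal_mul_spectralMatrix_mul_star_apply_one_one,
    mul_diagonal, star_eq_conjTranspose, diagonal_conjTranspose, diagonal_mul] at h11
  simpa [G.ω_one, H.ω_one, Complex.real_smul] using h11

theorem S_mul_spectralMatrix_mul_star_S {M : Matrix I A ℂ}
    (hM : diagonal G.ω * M = M * diagonal H.ω)
    (hMD : G.S * M * star H.S = spectralMatrix G H k d p)
    (hC : G.C ^ 3 * star (H.C ^ 3) = 1)
    (hph : ∀ e, p e ≠ 0 → G.ω (k e) * star (H.ω (d e)) = 1) :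
    G.S * spectralMatrix G H k d p * star H.S = spectralMatrix G H k d p := by
  have hD := G.diagonal_mul_spectralMatrix_mul_star_diagonal H k d p hph
  have hconj := G.smul_S_mul_diagonal_mul_mul_star_diagonal_mul_star_S H hM
  rw [hMD, hC, one_smul] at hconj
  calc G.S * spectralMatrix G H k d p * star H.S
      = G.S * (diagonal G.ω * spectralMatrix G H k d p * star (diagonal H.ω)) * star H.S := by
        rw [hD]
    _ = star (diagonal G.ω) * spectralMatrix G H k d p * diagonal H.ω := by
        rw [← hconj]; simp only [Matrix.mul_assoc]
    _ = spectralMatrix G H k d p :=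
        ((mul_mul_star_eq_iff G.diagonal_ω_mem_unitaryGroup
          H.diagonal_ω_mem_unitaryGroup).mp hD).symm

end ModularDatum

theorem conformal_inclusion_branching_modular_general {I A E : Type*}
    [Fintype I] [DecidableEq I] [Fintype A] [DecidableEq A] [Fintype E]
    (G : ModularDatum I) (H : ModularDatum A)
    (b : I → A → ℝ) (hb1 : b G.one H.one = 1)
    (k : E → I) (d : E → A) (p : E → ℝ) (hp : ∀ e, 0 ≤ p e)
    (ha : ∀ i α, (b i α : ℂ) =
      ∑ e, (G.S (G.bar i) (k e) / G.S G.one (k e)) *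
           (H.S α (d e) / H.S H.one (d e)) * (p e : ℂ))
    (hvac : ∃ e₀, k e₀ = G.one ∧ d e₀ = H.one ∧ 0 < p e₀)
    (hph : ∀ j β, b j β ≠ 0 → G.ω j = H.ω β)
    (hnorm : ∑ j, ∑ β, G.S G.one j * star (H.S H.one β) * (b j β : ℂ) = 1) :
    G.C ^ 3 = H.C ^ 3 ∧
    ∀ i α, (b i α : ℂ) = ∑ j, ∑ β, G.S i j * star (H.S α β) * (b j β : ℂ) := by
  obtain ⟨e₀, hk₀, hd₀, hp₀⟩ := hvac
  set B : Matrix I A ℂ := of fun i α => (b i α : ℂ)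
  have hBD : G.S * B * star H.S = G.spectralMatrix H k d p :=
    G.S_mul_of_mul_star_S_eq_spectralMatrix H k d p ha
  have hB_comm : diagonal G.ω * B = B * diagonal H.ω :=
    diagonal_mul_eq_mul_diagonal fun j β hjβ => hph j β (by simpa [B] using hjβ)
  have hp_sum : ∑ e, p e = 1 := by
    have h11 := ha G.one H.one
    simp only [hb1, G.bar_one, div_self (G.S_one_ne_zero_s17 _), div_self (H.S_one_ne_zero_s17 _),
      one_mul] at h11
    exact_mod_cast h11.symm
  have hmean : G.C ^ 3 * star (H.C ^ 3) * ∑ e, p e • (G.ω (k e) * star (H.ω (d e))) = 1 := by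
    rw [G.C_pow_three_mul_star_mul_sum_phase_eq H k d p hB_comm hBD, ← hBD, mul_mul_star_apply, ← hnorm]
    simp [B]
  obtain ⟨hc, hphase⟩ := eq_one_of_mul_sum_smul_eq_one hp hp_sum
    (fun e => by simp [G.ω_abs, H.ω_abs]) (by simp [G.C_abs, H.C_abs]) hmean hp₀.ne'
    (by rw [hk₀, hd₀, G.ω_one, H.ω_one, star_one, mul_one])
  have hD_fixed := G.S_mul_spectralMatrix_mul_star_S H k d p hB_comm hBD hc hphase
  refine ⟨?_, fun i α => ?_⟩
  · rwa [star_pow, H.star_C_s17, inv_pow, mul_inv_eq_one₀ (pow_ne_zero 3 H.C_ne_zero_s17)] at hc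
  · have hB_eq : B = G.spectralMatrix H k d p :=
      ((mul_mul_star_eq_iff G.S_unitary H.S_unitary).mp hBD).trans
        ((mul_mul_star_eq_iff G.S_unitary H.S_unitary).mp hD_fixed).symm
    calc (b i α : ℂ) = (G.S * B * star H.S) i α := by rw [hBD, ← hB_eq]; rfl
      _ = _ := mul_mul_star_apply G.S B H.S i α

/-- The remark after Proposition 3.1: for branching coefficients `b` of a
conformal inclusion satisfying the spectral decomposition (a), the vacuum node (b), the
phase condition (c) and the normalization (d), one has `C³ = Ċ³` and
`b(i,α) = Σ_{j,β} S_{ij} conj(Ṡ_{αβ}) b(j,β)`. -/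
theorem conformal_inclusion_branching_modular {I A E : Type*}
    [Fintype I] [DecidableEq I] [Fintype A] [DecidableEq A] [Fintype E]
    (G : ModularDatum I) (H : ModularDatum A)
    (b : I → A → ℝ) (hb : ∀ i α, 0 ≤ b i α) (hb1 : b G.one H.one = 1)
    (k : E → I) (d : E → A) (p : E → ℝ) (hp : ∀ e, 0 ≤ p e)
    (ha : ∀ i α, (b i α : ℂ) =
      ∑ e, (G.S (G.bar i) (k e) / G.S G.one (k e)) *
           (H.S α (d e) / H.S H.one (d e)) * (p e : ℂ))
    (hvac : ∃ e₀, k e₀ = G.one ∧ d e₀ = H.one ∧ 0 < p e₀)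
    (hph : ∀ j β, b j β ≠ 0 → G.ω j = H.ω β)
    (hnorm : ∑ j, ∑ β, G.S G.one j * star (H.S H.one β) * (b j β : ℂ) = 1) :
    G.C ^ 3 = H.C ^ 3 ∧
    ∀ i α, (b i α : ℂ) = ∑ j, ∑ β, G.S i j * star (H.S α β) * (b j β : ℂ) :=
  conformal_inclusion_branching_modular_general G H b hb1 k d p hp ha hvac hph hnorm
end
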